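/- For every flow network G=(V,E) and lifted graph G'=(V',E') as above, every feasible integral solution (x,y,y') of the lifted disjoint paths problem satisfies all path-induced cut inequalities: for every lifted edge vw ∈ E', every node u with uw ∈ R and u ≠ w, and every vu-path P in G, y'_{vw} ≤ Σ_{i ∈ P_V} Σ_{k ∉ P_V: ik∈E, kw∈R} y_{ik}. -/

import Mathlib

open Finset
open scoped Classical

section LiftedDisjointPaths

variable {V : Type*} [Fintype V] [DecidableEq V]

/-- A `vw`-path in the digraph with edge set `E`, given by its (nonempty) list of vertices:
it starts at `v`, ends at `w`, and consecutive vertices are joined by edges of `E`. -/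
def IsPath (E : Finset (V × V)) (v w : V) (p : List V) : Prop :=
  p ≠ [] ∧ p.head? = some v ∧ p.getLast? = some w ∧ p.Chain' (fun a b => (a, b) ∈ E)

/-- The edge list `P_E` of a path given by its vertex list. -/
def pEdges (p : List V) : List (V × V) := p.zip p.tail

/-- The reachability relation `R`: `vw ∈ R` iff `v = w` or there is a `vw`-path in `G`. -/
def Reach (E : Finset (V × V)) (v w : V) : Prop :=
  v = w ∨ ∃ p, IsPath E v w p

/-- `G = (V,E)` is a flow network with source `s` and sink `t`: it is acyclic, every node is
reachable from `s`, and `t` is reachable from every node. -/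
structure IsFlowNetwork (E : Finset (V × V)) (s t : V) : Prop where
  acyclic : ∀ v w : V, (v, w) ∈ E → ¬ Reach E w v
  reach_from_source : ∀ v : V, Reach E s v
  reach_to_sink : ∀ v : V, Reach E v t

/-- The lifted graph `G' = (V', E')` has node set `V' = V ∖ {s,t}`. -/
def IsLiftedGraph (E' : Finset (V × V)) (s t : V) : Prop :=
  ∀ e ∈ E', e.1 ≠ s ∧ e.1 ≠ t ∧ e.2 ≠ s ∧ e.2 ≠ t

/-- `y ∈ [0,1]^E`. -/
def InUnitBox (E : Finset (V × V)) (y : V × V → ℝ) : Prop :=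
  ∀ e ∈ E, 0 ≤ y e ∧ y e ≤ 1

/-! ### Paths in the multigraph `G ∪ G'` -/

/-- Vertex list `P_V` of a path in `G ∪ G'` starting at `v`; each step of `q` records the next
vertex together with a flag saying whether the edge used is a lifted edge. -/
def mVerts (v : V) (q : List (V × Bool)) : List V := v :: q.map Prod.fst

/-- The labelled edge list of a path in `G ∪ G'`. -/
def mEdges (v : V) (q : List (V × Bool)) : List ((V × V) × Bool) :=
  List.zipWith (fun a ub => ((a, ub.1), ub.2)) (mVerts v q) q

/-- `P_E`: the set of base edges of a path in `G ∪ G'`. -/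
def mBase (v : V) (q : List (V × Bool)) : Finset (V × V) :=
  ((mEdges v q).filterMap fun eb => if eb.2 then none else some eb.1).toFinset

/-- `P_{E'}`: the set of lifted edges of a path in `G ∪ G'`. -/
def mLifted (v : V) (q : List (V × Bool)) : Finset (V × V) :=
  ((mEdges v q).filterMap fun eb => if eb.2 then some eb.1 else none).toFinset

/-- A `vw`-path in the multigraph `G ∪ G'`: it starts at `v`, ends at `w`, each base step uses
an edge of `E`, each lifted step uses an edge of `E'`, and the sets of base and lifted edges
used are disjoint. -/
def IsMPath (E E' : Finset (V × V)) (v w : V) (q : List (V × Bool)) : Prop :=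
  (mVerts v q).getLast? = some w ∧
  (∀ eb ∈ mEdges v q, if eb.2 then eb.1 ∈ E' else eb.1 ∈ E) ∧
  Disjoint (mBase v q) (mLifted v q)

/-! ### The families of linear inequalities -/

/-- All path inequalities: for every lifted edge `vw ∈ E'` and every `vw`-path `P` in `G`,
`y'_{vw} ≥ Σ_{j ∈ P_V : vj ∈ E} y_{vj} − Σ_{i ∈ P_V∖{v,w}} Σ_{k ∉ P_V : ik ∈ E} y_{ik}`. -/
def PathIneqs (E E' : Finset (V × V)) (y y' : V × V → ℝ) : Prop :=
  ∀ v w : V, (v, w) ∈ E' → ∀ p : List V, IsPath E v w p →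
    (∑ j ∈ p.toFinset.filter (fun j => (v, j) ∈ E), y (v, j))
      - (∑ i ∈ p.toFinset \ {v, w},
          ∑ k ∈ (univ \ p.toFinset).filter (fun k => (i, k) ∈ E), y (i, k))
    ≤ y' (v, w)

/-- All lifted multicut path inequalities: for every lifted edge `vw ∈ E'` and every
`vw`-path `P` in `G`, `y'_{vw} ≥ Σ_{ij ∈ P_E} (y_{ij} − 1) + 1`. -/
def MulticutPathIneqs (E E' : Finset (V × V)) (y y' : V × V → ℝ) : Prop :=
  ∀ v w : V, (v, w) ∈ E' → ∀ p : List V, IsPath E v w p →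
    (∑ e ∈ (pEdges p).toFinset, (y e - 1)) + 1 ≤ y' (v, w)

/-- All lifted path inequalities: for every lifted edge `vw ∈ E'` and every `vw`-path `P` in
`G ∪ G'`, `y'_{vw} ≥ Σ_{j ∈ P_V : vj∈E} y_{vj} − Σ_{i ∈ P_V∖{v,w}} Σ_{k ∉ P_V : ik∈E} y_{ik}
+ Σ_{ij ∈ P_{E'}} y'_{ij} − Σ_{ij ∈ P_{E'} : ij∈E} y_{ij}`. -/
def LiftedPathIneqs (E E' : Finset (V × V)) (y y' : V × V → ℝ) : Prop :=
  ∀ v w : V, (v, w) ∈ E' → ∀ q : List (V × Bool), IsMPath E E' v w q →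
    (∑ j ∈ (mVerts v q).toFinset.filter (fun j => (v, j) ∈ E), y (v, j))
      - (∑ i ∈ (mVerts v q).toFinset \ {v, w},
          ∑ k ∈ (univ \ (mVerts v q).toFinset).filter (fun k => (i, k) ∈ E), y (i, k))
      + (∑ e ∈ mLifted v q, y' e)
      - (∑ e ∈ (mLifted v q).filter (fun e => e ∈ E), y e)
    ≤ y' (v, w)

/-- All path-induced cut inequalities: for every lifted edge `vw ∈ E'`, every node `u` with
`uw ∈ R` and `u ≠ w`, and every `vu`-path `P` in `G`,
`y'_{vw} ≤ Σ_{i ∈ P_V} Σ_{k ∉ P_V : ik∈E, kw∈R} y_{ik}`. -/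
def PathCutIneqs (E E' : Finset (V × V)) (y y' : V × V → ℝ) : Prop :=
  ∀ v w : V, (v, w) ∈ E' → ∀ u : V, Reach E u w → u ≠ w → ∀ p : List V, IsPath E v u p →
    y' (v, w) ≤
      ∑ i ∈ p.toFinset,
        ∑ k ∈ (univ \ p.toFinset).filter (fun k => (i, k) ∈ E ∧ Reach E k w), y (i, k)

/-- All lifted path-induced cut inequalities: for every lifted edge `vw ∈ E'`, every node `u`
with `uw ∈ R` and `u ≠ w`, and every `vu`-path `P` in `G ∪ G'`,
`y'_{vw} ≤ Σ_{i ∈ P_V} Σ_{k ∉ P_V : ik∈E, kw∈R} y_{ik} − Σ_{ij ∈ P_{E'}} y'_{ij}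
+ Σ_{ij ∈ P_{E'} : ij∈E} y_{ij}`. -/
def LiftedPathCutIneqs (E E' : Finset (V × V)) (y y' : V × V → ℝ) : Prop :=
  ∀ v w : V, (v, w) ∈ E' → ∀ u : V, Reach E u w → u ≠ w →
    ∀ q : List (V × Bool), IsMPath E E' v u q →
    y' (v, w) ≤
      (∑ i ∈ (mVerts v q).toFinset,
        ∑ k ∈ (univ \ (mVerts v q).toFinset).filter (fun k => (i, k) ∈ E ∧ Reach E k w),
          y (i, k))
      - (∑ e ∈ mLifted v q, y' e)
      + (∑ e ∈ (mLifted v q).filter (fun e => e ∈ E), y e)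

/-- All strengthened lifted path-induced cut inequalities: for every lifted edge `vw ∈ E'`
and every `vu`-path `P` in `G ∪ G'` with `uw ∈ E'`,
`y'_{vw} ≤ Σ_{i ∈ P_V∖{u}} Σ_{k ∉ P_V : ik∈E, kw∈R} y_{ik} − Σ_{ij ∈ P_{E'}} y'_{ij}
+ Σ_{ij ∈ P_{E'} : ij∈E} y_{ij} + y'_{uw}`. -/
def StrongLiftedPathCutIneqs (E E' : Finset (V × V)) (y y' : V × V → ℝ) : Prop :=
  ∀ v w : V, (v, w) ∈ E' → ∀ u : V, (u, w) ∈ E' →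
    ∀ q : List (V × Bool), IsMPath E E' v u q →
    y' (v, w) ≤
      (∑ i ∈ (mVerts v q).toFinset \ {u},
        ∑ k ∈ (univ \ (mVerts v q).toFinset).filter (fun k => (i, k) ∈ E ∧ Reach E k w),
          y (i, k))
      - (∑ e ∈ mLifted v q, y' e)
      + (∑ e ∈ (mLifted v q).filter (fun e => e ∈ E), y e)
      + y' (u, w)

/-- All symmetric path-induced cut inequalities: for every lifted edge `vw ∈ E'`, every node
`u` with `vu ∈ R` and `u ≠ v`, and every `uw`-path `P` in `G`,
`y'_{vw} ≤ Σ_{i ∈ P_V} Σ_{k ∉ P_V : ki∈E, vk∈R} y_{ki}`. -/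
def SymPathCutIneqs (E E' : Finset (V × V)) (y y' : V × V → ℝ) : Prop :=
  ∀ v w : V, (v, w) ∈ E' → ∀ u : V, Reach E v u → u ≠ v → ∀ p : List V, IsPath E u w p →
    y' (v, w) ≤
      ∑ i ∈ p.toFinset,
        ∑ k ∈ (univ \ p.toFinset).filter (fun k => (k, i) ∈ E ∧ Reach E v k), y (k, i)

/-- All symmetric lifted path-induced cut inequalities: for every lifted edge `vw ∈ E'`,
every node `u` with `vu ∈ R` and `u ≠ v`, and every `uw`-path `P` in `G ∪ G'`,
`y'_{vw} ≤ Σ_{i ∈ P_V} Σ_{k ∉ P_V : ki∈E, vk∈R} y_{ki} − Σ_{ij ∈ P_{E'}} y'_{ij}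
+ Σ_{ij ∈ P_{E'} : ij∈E} y_{ij}`. -/
def SymLiftedPathCutIneqs (E E' : Finset (V × V)) (y y' : V × V → ℝ) : Prop :=
  ∀ v w : V, (v, w) ∈ E' → ∀ u : V, Reach E v u → u ≠ v →
    ∀ q : List (V × Bool), IsMPath E E' u w q →
    y' (v, w) ≤
      (∑ i ∈ (mVerts u q).toFinset,
        ∑ k ∈ (univ \ (mVerts u q).toFinset).filter (fun k => (k, i) ∈ E ∧ Reach E v k),
          y (k, i))
      - (∑ e ∈ mLifted u q, y' e)
      + (∑ e ∈ (mLifted u q).filter (fun e => e ∈ E), y e)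

/-- All strengthened symmetric lifted path-induced cut inequalities: for every lifted edge
`vw ∈ E'` and every `uw`-path `P` in `G ∪ G'` with `vu ∈ E'`,
`y'_{vw} ≤ Σ_{i ∈ P_V∖{u}} Σ_{k ∉ P_V : ki∈E, vk∈R} y_{ki} − Σ_{ij ∈ P_{E'}} y'_{ij}
+ Σ_{ij ∈ P_{E'} : ij∈E} y_{ij} + y'_{vu}`. -/
def StrongSymLiftedPathCutIneqs (E E' : Finset (V × V)) (y y' : V × V → ℝ) : Prop :=
  ∀ v w : V, (v, w) ∈ E' → ∀ u : V, (v, u) ∈ E' →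
    ∀ q : List (V × Bool), IsMPath E E' u w q →
    y' (v, w) ≤
      (∑ i ∈ (mVerts u q).toFinset \ {u},
        ∑ k ∈ (univ \ (mVerts u q).toFinset).filter (fun k => (k, i) ∈ E ∧ Reach E v k),
          y (k, i))
      - (∑ e ∈ mLifted u q, y' e)
      + (∑ e ∈ (mLifted u q).filter (fun e => e ∈ E), y e)
      + y' (v, u)

/-- The two single node cut inequalities for every lifted edge `vw ∈ E'`:
`y'_{vw} ≤ Σ_{u : vu∈E, uw∈R} y_{vu}` and `y'_{vw} ≤ Σ_{u : uw∈E, vu∈R} y_{uw}`. -/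
def SingleNodeCutIneqs (E E' : Finset (V × V)) (y y' : V × V → ℝ) : Prop :=
  ∀ v w : V, (v, w) ∈ E' →
    (y' (v, w) ≤ ∑ u ∈ univ.filter (fun u => (v, u) ∈ E ∧ Reach E u w), y (v, u)) ∧
    (y' (v, w) ≤ ∑ u ∈ univ.filter (fun u => (u, w) ∈ E ∧ Reach E v u), y (u, w))

/-- A feasible integral solution `(x,y,y')` of the lifted disjoint paths problem:
`x,y,y'` are binary, flow conservation holds at every node other than `s` and `t`, and a
lifted edge is active iff there is an active path in `G` between its endpoints. -/
def FeasibleIntegral (E E' : Finset (V × V)) (s t : V)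
    (x : V → ℝ) (y y' : V × V → ℝ) : Prop :=
  (∀ v : V, x v = 0 ∨ x v = 1) ∧
  (∀ e ∈ E, y e = 0 ∨ y e = 1) ∧
  (∀ e ∈ E', y' e = 0 ∨ y' e = 1) ∧
  (∀ v : V, v ≠ s → v ≠ t →
    (∑ u ∈ univ.filter (fun u => (u, v) ∈ E), y (u, v)) = x v ∧
    (∑ w ∈ univ.filter (fun w => (v, w) ∈ E), y (v, w)) = x v) ∧
  (∀ v w : V, (v, w) ∈ E' →
    (y' (v, w) = 1 ↔ ∃ p : List V, IsPath E v w p ∧ ∀ e ∈ pEdges p, y e = 1))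

end LiftedDisjointPaths

/-! If `y'_{vw} = 1`, some `vw`-path has `y = 1` on all its edges. It starts on `P_V` and, by
acyclicity, ends off `P_V` (`w ∈ P_V` together with `uw ∈ R` would close a cycle through
`u ≠ w`). Its first edge leaving `P_V` is an edge `ik` with `i ∈ P_V`, `k ∉ P_V`, `kw ∈ R` and
`y_{ik} = 1`, so the right-hand side is at least one; it is never negative, since `y` is
binary. -/

section Paths

variable {V : Type*} {E : Finset (V × V)}

lemma not_isPath_nil {a c : V} : ¬ IsPath E a c [] :=
  fun h => h.1 rfl

lemma isPath_singleton_iff {a c x : V} : IsPath E a c [x] ↔ x = a ∧ x = c := by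
  simp [IsPath, eq_comm, List.Chain']

lemma isPath_cons_cons_iff {a c x y : V} {l : List V} :
    IsPath E a c (x :: y :: l) ↔ x = a ∧ (a, y) ∈ E ∧ IsPath E y c (y :: l) := by
  simp only [IsPath, ne_eq, reduceCtorEq, not_false_eq_true, List.head?_cons, Option.some.injEq,
    List.getLast?_cons_cons, List.Chain', List.isChain_cons_cons, true_and]
  constructor
  · rintro ⟨rfl, hlast, hxy, hchain⟩
    exact ⟨rfl, hxy, hlast, hchain⟩
  · rintro ⟨rfl, hxy, hlast, hchain⟩
    exact ⟨rfl, hlast, hxy, hchain⟩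

lemma IsPath.head_mem {a c : V} {p : List V} (hp : IsPath E a c p) : a ∈ p := by
  obtain ⟨-, hhead, -⟩ := hp
  exact List.mem_of_mem_head? hhead

lemma IsPath.cons {a b c : V} {p : List V} (hp : IsPath E b c p) (hab : (a, b) ∈ E) :
    IsPath E a c (a :: p) := by
  match p, hp with
  | [], hp => exact absurd hp not_isPath_nil
  | x :: l, hp =>
    obtain rfl : x = b := by simpa using hp.2.1
    exact isPath_cons_cons_iff.2 ⟨rfl, hab, hp⟩

lemma reach_iff_reflTransGen {a b : V} :
    Reach E a b ↔ Relation.ReflTransGen (fun x y => (x, y) ∈ E) a b := by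
  constructor
  · rintro (rfl | ⟨p, hp⟩)
    · exact .refl
    induction p generalizing a with
    | nil => exact absurd hp not_isPath_nil
    | cons x l ih =>
      match l, hp with
      | [], hp =>
        obtain ⟨rfl, rfl⟩ := isPath_singleton_iff.1 hp
        exact .refl
      | y :: l, hp =>
        obtain ⟨rfl, hxy, hp⟩ := isPath_cons_cons_iff.1 hp
        exact .head hxy (ih hp)
  · intro h
    induction h using Relation.ReflTransGen.head_induction_on with
    | refl => exact .inl rfl
    | head hab _ ih =>
      rcases ih with rfl | ⟨p, hp⟩
      · exact .inr ⟨_, (isPath_singleton_iff.2 ⟨rfl, rfl⟩).cons hab⟩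
      · exact .inr ⟨_, hp.cons hab⟩

lemma Reach.trans {a b c : V} (hab : Reach E a b) (hbc : Reach E b c) : Reach E a c :=
  reach_iff_reflTransGen.2 ((reach_iff_reflTransGen.1 hab).trans (reach_iff_reflTransGen.1 hbc))

lemma IsPath.reach_of_mem {a c z : V} {p : List V} (hp : IsPath E a c p) (hz : z ∈ p) :
    Reach E z c := by
  induction p generalizing a with
  | nil => exact absurd hp not_isPath_nil
  | cons x l ih =>
    rcases List.mem_cons.1 hz with rfl | hz
    · obtain rfl : z = a := by simpa using hp.2.1
      exact .inr ⟨_, hp⟩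
    match l, hp, hz with
    | y :: l, hp, hz => exact ih (isPath_cons_cons_iff.1 hp).2.2 hz

lemma IsPath.exists_edge_leaving {a c : V} {p : List V} (hp : IsPath E a c p) (S : Finset V)
    (ha : a ∈ S) (hc : c ∉ S) :
    ∃ i k, (i, k) ∈ pEdges p ∧ i ∈ S ∧ k ∉ S ∧ (i, k) ∈ E ∧ Reach E k c := by
  induction p generalizing a with
  | nil => exact absurd hp not_isPath_nil
  | cons x l ih =>
    match l, hp with
    | [], hp =>
      obtain ⟨rfl, rfl⟩ := isPath_singleton_iff.1 hp
      exact absurd ha hc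
    | y :: l, hp =>
      obtain ⟨rfl, hxy, hp⟩ := isPath_cons_cons_iff.1 hp
      have hedges : pEdges (x :: y :: l) = (x, y) :: pEdges (y :: l) := rfl
      by_cases hy : y ∈ S
      · obtain ⟨i, k, hik, hiS, hkS, hikE, hkc⟩ := ih hp hy
        exact ⟨i, k, hedges ▸ List.mem_cons_of_mem _ hik, hiS, hkS, hikE, hkc⟩
      · exact ⟨x, y, hedges ▸ List.mem_cons_self, ha, hy, hxy, hp.reach_of_mem List.mem_cons_self⟩

lemma IsFlowNetwork.reach_antisymm {s t a b : V} (hG : IsFlowNetwork E s t)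
    (hab : Reach E a b) (hba : Reach E b a) : a = b := by
  rcases (reach_iff_reflTransGen.1 hab).cases_head with hab | ⟨z, haz, hzb⟩
  · exact hab
  · exact absurd (reach_iff_reflTransGen.2 hzb |>.trans hba) (hG.acyclic a z haz)

end Paths

theorem feasible_integral_satisfies_path_cut_ineqs_general
    {V : Type*} [Fintype V] [DecidableEq V] (E E' : Finset (V × V)) (s t : V)
    (hG : IsFlowNetwork E s t)
    (x : V → ℝ) (y y' : V × V → ℝ)
    (h : FeasibleIntegral E E' s t x y y') :
    PathCutIneqs E E' y y' := by
  obtain ⟨-, hy, hy', -, hactive⟩ := h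
  intro v w hvw u huw hne p hp
  have hy_nonneg : ∀ e ∈ E, 0 ≤ y e := fun e he => by rcases hy e he with h | h <;> simp [h]
  set cut := fun i => ∑ k ∈ (univ \ p.toFinset).filter (fun k => (i, k) ∈ E ∧ Reach E k w),
    y (i, k)
  have hcut_nonneg : ∀ i ∈ p.toFinset, 0 ≤ cut i := fun i _ =>
    sum_nonneg fun k hk => hy_nonneg _ (mem_filter.1 hk).2.1
  rcases hy' (v, w) hvw with h0 | h1
  · rw [h0]
    exact sum_nonneg hcut_nonneg
  obtain ⟨q, hq, hq_active⟩ := (hactive v w hvw).1 h1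
  have hw : w ∉ p.toFinset := fun hw =>
    hne (hG.reach_antisymm huw (hp.reach_of_mem (List.mem_toFinset.1 hw)))
  obtain ⟨i, k, hik, hi, hk, hikE, hkw⟩ :=
    hq.exists_edge_leaving p.toFinset (List.mem_toFinset.2 hp.head_mem) hw
  rw [h1, ← hq_active _ hik]
  calc y (i, k) ≤ cut i :=
        single_le_sum (fun k hk => hy_nonneg _ (mem_filter.1 hk).2.1)
          (mem_filter.2 ⟨mem_sdiff.2 ⟨mem_univ k, hk⟩, hikE, hkw⟩)
    _ ≤ ∑ i ∈ p.toFinset, cut i := single_le_sum hcut_nonneg hi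

/-- Every feasible integral solution of the lifted disjoint paths problem
satisfies all path-induced cut inequalities. -/
theorem feasible_integral_satisfies_path_cut_ineqs
    {V : Type*} [Fintype V] [DecidableEq V] (E E' : Finset (V × V)) (s t : V)
    (hG : IsFlowNetwork E s t) (hG' : IsLiftedGraph E' s t)
    (x : V → ℝ) (y y' : V × V → ℝ)
    (h : FeasibleIntegral E E' s t x y y') :
    PathCutIneqs E E' y y' :=
  feasible_integral_satisfies_path_cut_ineqs_general E E' s t hG x y y' h
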